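/- Consider the symmetric discounted N-user broadcast MDP (all arrival probabilities equal). If V_α is invariant under permuting users' (age, arrival) coordinates and nondecreasing in each age, then at any state with λ₁ = λ_j = 1 and x₁ ≥ x_j, updating user 1 is at least as good as updating user j: ν_α(x₁, x_{−1}, λ; 1) ≤ ν_α(x₁, x_{−1}, λ; j), where ν_α(s;d) = C(s,d) + αE[V_α(s')]. -/
import Mathlib


/-- Next ages: user `d`'s age resets to 1 if scheduled with an arrival;
otherwise each age increments. -/
def nextAges {N : ℕ} (x : Fin N → ℕ) (lam : Fin N → Bool) (d : Option (Fin N)) :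
    Fin N → ℕ :=
  fun i => if d = some i ∧ lam i = true then 1 else x i + 1

/-- Immediate cost `C(s,d) = Σᵢ (xᵢ + 1) − x_d·λ_d`. -/
def mdpCost {N : ℕ} (x : Fin N → ℕ) (lam : Fin N → Bool) (d : Option (Fin N)) : ℝ :=
  (∑ i, ((x i : ℝ) + 1)) -
    (match d with
     | none => 0
     | some j => if lam j = true then (x j : ℝ) else 0)

/-- Probability of arrival vector `lam'` with identical Bernoulli(`p`) arrivals. -/
def arrWeight {N : ℕ} (p : ℝ) (lam' : Fin N → Bool) : ℝ :=
  ∏ _i : Fin N, (if lam' _i = true then p else 1 - p)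

/-- One-step cost-to-go `ν_α(s; d) = C(s,d) + α E[V_α(s')]`. -/
noncomputable def nu {N : ℕ} (p : ℝ) (α : ℝ)
    (V : (Fin N → ℕ) → (Fin N → Bool) → ℝ)
    (x : Fin N → ℕ) (lam : Fin N → Bool) (d : Option (Fin N)) : ℝ :=
  mdpCost x lam d +
    α * ∑ lam' : Fin N → Bool, arrWeight p lam' * V (nextAges x lam d) lam'

/-- In the symmetric broadcast MDP (identical arrival rates), if the value
function is permutation-invariant and nondecreasing in each age, then at any
state where users `u` and `j` both have arrivals and `u`'s age is at least
`j`'s, updating user `u` is at least as good as updating user `j`. -/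
theorem stmt_17 (N : ℕ) (hN : 1 ≤ N) (p : ℝ) (hp : 0 < p) (hp1 : p ≤ 1)
    (α : ℝ) (hα0 : 0 < α) (hα1 : α < 1)
    (V : (Fin N → ℕ) → (Fin N → Bool) → ℝ)
    (hsym : ∀ (σ : Equiv.Perm (Fin N)) (x : Fin N → ℕ) (lam : Fin N → Bool),
      V (x ∘ σ) (lam ∘ σ) = V x lam)
    (hmono : ∀ (lam : Fin N → Bool) (i : Fin N) (x y : Fin N → ℕ),
      (∀ j, j ≠ i → x j = y j) → x i ≤ y i → V x lam ≤ V y lam)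
    (x : Fin N → ℕ) (hx : ∀ i, 1 ≤ x i) (lam : Fin N → Bool)
    (u j : Fin N) (hu : lam u = true) (hj : lam j = true) (hxuj : x j ≤ x u) :
    nu p α V x lam (some u) ≤ nu p α V x lam (some j) := by
  rcases eq_or_ne u j with rfl | huj
  · exact le_refl _
  set σ : Equiv.Perm (Fin N) := Equiv.swap u j with hσ
  have hw : ∀ lam' : Fin N → Bool, 0 ≤ arrWeight p lam' := by
    intro lam'
    apply Finset.prod_nonneg
    intro i _
    split <;> linarith
  have hcost : mdpCost x lam (some u) ≤ mdpCost x lam (some j) := by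
    simp only [mdpCost, hu, hj, if_true]
    have : (x j : ℝ) ≤ (x u : ℝ) := by exact_mod_cast hxuj
    linarith
  -- reindex the j-sum
  have hre : ∑ lam' : Fin N → Bool, arrWeight p lam' * V (nextAges x lam (some j)) lam'
      = ∑ lam' : Fin N → Bool, arrWeight p lam' * V (nextAges x lam (some j) ∘ σ) lam' := by
    refine Fintype.sum_bijective (fun f => f ∘ σ)
      ((Equiv.arrowCongr σ.symm (Equiv.refl Bool)).bijective) _ _ ?_
    intro f
    have hwre : arrWeight p (f ∘ σ) = arrWeight p f := by
      unfold arrWeight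
      exact Equiv.prod_comp σ (fun i => if f i = true then p else 1 - p)
    rw [hwre, hsym σ (nextAges x lam (some j)) f]
  have hsum : ∑ lam' : Fin N → Bool, arrWeight p lam' * V (nextAges x lam (some u)) lam'
      ≤ ∑ lam' : Fin N → Bool, arrWeight p lam' * V (nextAges x lam (some j)) lam' := by
    rw [hre]
    apply Finset.sum_le_sum
    intro f _
    apply mul_le_mul_of_nonneg_left _ (hw f)
    apply hmono f j
    · intro k hkj
      simp only [Function.comp, nextAges]
      rcases eq_or_ne k u with rfl | hku
      · rw [hσ, Equiv.swap_apply_left]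
        simp [hu, hj, huj.symm]
      · rw [hσ, Equiv.swap_apply_of_ne_of_ne hku hkj]
        have h1 : ¬ (some u = some k) := by simpa using (Ne.symm hku)
        have h2 : ¬ (some j = some k) := by simpa using (Ne.symm hkj)
        simp [h1, h2]
    · simp only [Function.comp, nextAges, hσ, Equiv.swap_apply_right]
      have h1 : ¬ (some u = some j ∧ lam j = true) := by simp [huj]
      have h2 : ¬ (some j = some u ∧ lam u = true) := by simp [huj.symm]
      rw [if_neg h1, if_neg h2]
      omega
  unfold nu
  exact add_le_add hcost (mul_le_mul_of_nonneg_left hsum hα0.le)
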